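/- arXiv:0807.3332 — 2 statements merged into one kernel-verified Lean document; each statement's English description precedes it below -/
import Mathlib

section
/- Let g be a positive, non-degenerate random variable with ν_1 := E[1/g] < ∞, set ν_2 := (E[(1/g)^{1/2}])^2, and for B > 0 define J̄₂ᵒᵖᵗ(B) := E_g[ min_{0 ≤ b ≤ B} ( (2^b − 1)/g + ν_1 (2^{B−b} − 1) ) ]. Then lim_{B → ∞} J̄₂ᵒᵖᵗ(B) / ( 2 · 2^{B/2} (ν_2 ν_1)^{1/2} ) = 1. -/
open MeasureTheory Filter Topology
open Filter

/-- Expected total energy of the optimal causal two-slot scheduler: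
`J̄₂ᵒᵖᵗ(B) = E_g[ min_{0 ≤ b ≤ B} ( (2^b − 1)/g + ν₁ (2^{B−b} − 1) ) ]` with `ν₁ = E[1/g]`. -/
noncomputable def Jopt2 {Ω : Type*} [MeasurableSpace Ω] (μ : Measure Ω) (g : Ω → ℝ)
    (B : ℝ) : ℝ :=
  ∫ ω, sInf ((fun b : ℝ => ((2 : ℝ) ^ b - 1) / g ω
      + (∫ ω', 1 / g ω' ∂μ) * ((2 : ℝ) ^ (B - b) - 1)) '' Set.Icc 0 B) ∂μ

/-- The per-`b` cost function. -/
noncomputable def fbAux (ν t B b : ℝ) : ℝ :=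
  ((2 : ℝ) ^ b - 1) * t + ν * ((2 : ℝ) ^ (B - b) - 1)

/-- The inner infimum as a function of the scalar `t = 1/g ω`. -/
noncomputable def GAux (ν B t : ℝ) : ℝ := sInf (fbAux ν t B '' Set.Icc 0 B)

lemma one_le_two_rpow {b : ℝ} (hb : 0 ≤ b) : (1 : ℝ) ≤ (2 : ℝ) ^ b := by
  calc (1:ℝ) = (2:ℝ) ^ (0:ℝ) := by simp
  _ ≤ (2:ℝ) ^ b := Real.rpow_le_rpow_of_exponent_le one_le_two hb

lemma fbAux_nonneg {ν t B b : ℝ} (hν : 0 ≤ ν) (ht : 0 ≤ t) (hb : b ∈ Set.Icc 0 B) :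
    0 ≤ fbAux ν t B b := by
  have h1 := one_le_two_rpow hb.1
  have h2 := one_le_two_rpow (sub_nonneg.mpr hb.2)
  have : 0 ≤ ((2:ℝ)^b - 1) * t := mul_nonneg (by linarith) ht
  have : 0 ≤ ν * ((2:ℝ)^(B-b) - 1) := mul_nonneg hν (by linarith)
  unfold fbAux; linarith

lemma fbAux_bddBelow {ν t B : ℝ} (hν : 0 ≤ ν) (ht : 0 ≤ t) :
    BddBelow (fbAux ν t B '' Set.Icc 0 B) := by
  refine ⟨0, fun x hx => ?_⟩
  obtain ⟨b, hb, rfl⟩ := hx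
  exact fbAux_nonneg hν ht hb

lemma fbAux_nonempty {ν t B : ℝ} (hB : 0 ≤ B) :
    (fbAux ν t B '' Set.Icc 0 B).Nonempty :=
  ⟨fbAux ν t B 0, ⟨0, ⟨le_refl 0, hB⟩, rfl⟩⟩

lemma GAux_nonneg {ν t B : ℝ} (hν : 0 ≤ ν) (ht : 0 ≤ t) (hB : 0 ≤ B) :
    0 ≤ GAux ν B t :=
  le_csInf (fbAux_nonempty hB) (fun x hx => by
    obtain ⟨b, hb, rfl⟩ := hx; exact fbAux_nonneg hν ht hb)

lemma GAux_le {ν t B b : ℝ} (hν : 0 ≤ ν) (ht : 0 ≤ t) (hb : b ∈ Set.Icc 0 B) :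
    GAux ν B t ≤ fbAux ν t B b :=
  csInf_le (fbAux_bddBelow hν ht) ⟨b, hb, rfl⟩

lemma two_rpow_half_sq {B : ℝ} : (2:ℝ) ^ (B/2) * (2:ℝ) ^ (B/2) = (2:ℝ) ^ B := by
  rw [← Real.rpow_add two_pos, add_halves]

/-- Crude upper bound. -/
lemma GAux_le_crude {ν t B : ℝ} (hν : 0 ≤ ν) (ht : 0 ≤ t) (hB : 0 ≤ B) :
    GAux ν B t ≤ (2:ℝ) ^ (B/2) * (t + ν) := by
  have hb : B/2 ∈ Set.Icc (0:ℝ) B := ⟨by linarith, by linarith⟩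
  refine le_trans (GAux_le hν ht hb) ?_
  have h1 := one_le_two_rpow (by linarith : (0:ℝ) ≤ B/2)
  have hBb : B - B/2 = B/2 := by ring
  unfold fbAux
  rw [hBb]
  nlinarith

/-- Uniform AM-GM lower bound. -/
lemma GAux_lower {ν t B : ℝ} (hν : 0 ≤ ν) (ht : 0 ≤ t) (hB : 0 ≤ B) :
    2 * (2:ℝ) ^ (B/2) * Real.sqrt (ν * t) - t - ν ≤ GAux ν B t := by
  refine le_csInf (fbAux_nonempty hB) (fun x hx => ?_)
  obtain ⟨b, hb, rfl⟩ := hx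
  set u : ℝ := (2:ℝ) ^ b * t with hu_def
  set v : ℝ := ν * (2:ℝ) ^ (B - b) with hv_def
  have hub : (0:ℝ) < (2:ℝ) ^ b := Real.rpow_pos_of_pos two_pos b
  have hvb : (0:ℝ) < (2:ℝ) ^ (B - b) := Real.rpow_pos_of_pos two_pos (B - b)
  have hu : 0 ≤ u := mul_nonneg hub.le ht
  have hv : 0 ≤ v := mul_nonneg hν hvb.le
  have hbb : (2:ℝ)^b * (2:ℝ)^(B-b) = (2:ℝ)^B := by
    rw [← Real.rpow_add two_pos]; ring_nf
  have huv : u * v = ((2:ℝ)^(B/2) * Real.sqrt (ν * t))^2 := by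
    have hs : Real.sqrt (ν*t) ^ 2 = ν * t := Real.sq_sqrt (mul_nonneg hν ht)
    have h1 : u * v = ((2:ℝ)^b * (2:ℝ)^(B-b)) * (ν * t) := by
      rw [hu_def, hv_def]; ring
    rw [h1, hbb, mul_pow, hs, ← two_rpow_half_sq]; ring
  have hsq : Real.sqrt (u * v) = (2:ℝ)^(B/2) * Real.sqrt (ν * t) := by
    rw [huv, Real.sqrt_sq (by positivity)]
  have hamgm : 2 * Real.sqrt (u * v) ≤ u + v := by
    have h1 := Real.sq_sqrt hu
    have h2 := Real.sq_sqrt hv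
    have h3 : Real.sqrt (u * v) = Real.sqrt u * Real.sqrt v := Real.sqrt_mul hu v
    nlinarith [sq_nonneg (Real.sqrt u - Real.sqrt v)]
  have hfb : fbAux ν t B b = u + v - t - ν := by
    rw [hu_def, hv_def]; unfold fbAux; ring
  rw [hfb]
  rw [hsq] at hamgm
  linarith

/-- Sharp upper bound when the unconstrained optimum is feasible. -/
lemma GAux_upper {ν t B : ℝ} (hν : 0 < ν) (ht : 0 < t) (hB : 0 ≤ B)
    (h1 : t ≤ ν * (2:ℝ) ^ B) (h2 : ν ≤ t * (2:ℝ) ^ B) :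
    GAux ν B t ≤ 2 * (2:ℝ) ^ (B/2) * Real.sqrt (ν * t) := by
  set s : ℝ := Real.sqrt (ν * t) with hs_def
  have hs : 0 < s := Real.sqrt_pos.mpr (mul_pos hν ht)
  have hs2 : s ^ 2 = ν * t := Real.sq_sqrt (mul_pos hν ht).le
  have hP : (0:ℝ) < (2:ℝ) ^ (B/2) := Real.rpow_pos_of_pos two_pos _
  have hPB : (0:ℝ) < (2:ℝ) ^ B := Real.rpow_pos_of_pos two_pos _
  have h2B := two_rpow_half_sq (B := B)
  set x : ℝ := (2:ℝ)^(B/2) * s / t with hx_def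
  have hx : 0 < x := by positivity
  -- 1 ≤ x
  have h1x : 1 ≤ x := by
    rw [hx_def, le_div_iff₀ ht, one_mul]
    nlinarith [hs2, h2B, mul_le_mul_of_nonneg_right h1 ht.le, mul_pos hP hs, ht]
  -- x ≤ 2^B
  have hxB : x ≤ (2:ℝ) ^ B := by
    rw [hx_def, div_le_iff₀ ht]
    nlinarith [hs2, h2B, mul_le_mul_of_nonneg_right h2 hPB.le, mul_pos hP hs, ht, mul_pos (mul_pos hPB hPB) ht]
  set b : ℝ := Real.logb 2 x with hb_def
  have hxb : (2:ℝ) ^ b = x := Real.rpow_logb two_pos (by norm_num) hx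
  have hb0 : 0 ≤ b := Real.logb_nonneg (by norm_num) h1x
  have hbB : b ≤ B := by
    have := (Real.logb_le_logb (by norm_num : (1:ℝ) < 2) hx hPB).mpr hxB
    rwa [Real.logb_rpow two_pos (by norm_num)] at this
  refine le_trans (GAux_le hν.le ht.le ⟨hb0, hbB⟩) ?_
  have hBb : (2:ℝ) ^ (B - b) = (2:ℝ)^B / x := by
    rw [Real.rpow_sub two_pos, hxb]
  have key : x * t + ν * ((2:ℝ)^B / x) = 2 * (2:ℝ)^(B/2) * s := by
    rw [hx_def]
    field_simp
    nlinarith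
  unfold fbAux
  rw [hxb, hBb]
  nlinarith [key]

lemma fbAux_continuous_b (ν t B : ℝ) : Continuous (fun b => fbAux ν t B b) := by
  have h2 : Continuous (fun b : ℝ => (2:ℝ) ^ b) :=
    Continuous.rpow continuous_const continuous_id (fun x => Or.inl two_ne_zero)
  have h3 : Continuous (fun b : ℝ => (2:ℝ) ^ (B - b)) :=
    h2.comp (continuous_const.sub continuous_id)
  unfold fbAux
  exact ((h2.sub continuous_const).mul continuous_const).add
    (continuous_const.mul (h3.sub continuous_const))

lemma GAux_lipschitz (ν B : ℝ) (hB : 0 ≤ B) (t t' : ℝ) :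
    GAux ν B t ≤ GAux ν B t' + (2:ℝ)^B * |t - t'| := by
  have hne : (fbAux ν t' B '' Set.Icc 0 B).Nonempty := fbAux_nonempty hB
  have hbdd : BddBelow (fbAux ν t B '' Set.Icc 0 B) :=
    ((isCompact_Icc).image (fbAux_continuous_b ν t B)).bddBelow
  have hkey : ∀ x ∈ fbAux ν t' B '' Set.Icc 0 B, GAux ν B t - (2:ℝ)^B * |t - t'| ≤ x := by
    rintro x ⟨b, hb, rfl⟩
    have h1 : GAux ν B t ≤ fbAux ν t B b := csInf_le hbdd ⟨b, hb, rfl⟩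
    have hb1 := one_le_two_rpow hb.1
    have hb2 : (2:ℝ)^b ≤ (2:ℝ)^B := Real.rpow_le_rpow_of_exponent_le one_le_two hb.2
    have habs : ((2:ℝ)^b - 1) * (t - t') ≤ (2:ℝ)^B * |t - t'| := by
      calc ((2:ℝ)^b - 1) * (t - t') ≤ ((2:ℝ)^b - 1) * |t - t'| :=
            mul_le_mul_of_nonneg_left (le_abs_self _) (by linarith)
        _ ≤ (2:ℝ)^B * |t - t'| := mul_le_mul_of_nonneg_right (by linarith) (abs_nonneg _)
    have h2 : fbAux ν t B b ≤ fbAux ν t' B b + (2:ℝ)^B * |t - t'| := by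
      unfold fbAux; nlinarith [habs]
    linarith
  have := le_csInf hne hkey
  unfold GAux at this ⊢
  linarith

lemma GAux_continuous (ν B : ℝ) (hB : 0 ≤ B) : Continuous (GAux ν B) := by
  have hl : LipschitzWith ((2:ℝ)^B).toNNReal (GAux ν B) := by
    apply LipschitzWith.of_dist_le_mul
    intro t t'
    rw [Real.dist_eq, Real.dist_eq,
      Real.coe_toNNReal _ (Real.rpow_pos_of_pos two_pos B).le, abs_sub_le_iff]
    have h1 := GAux_lipschitz ν B hB t t'
    have h2 := GAux_lipschitz ν B hB t' t
    rw [abs_sub_comm] at h2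
    constructor <;> linarith
  exact hl.continuous



/-- As `B → ∞`, `J̄₂ᵒᵖᵗ(B) / (2 · 2^{B/2} (ν₂ ν₁)^{1/2}) → 1`, where `ν₁ = E[1/g]` and
`ν₂ = (E[(1/g)^{1/2}])²`. -/
theorem Jopt2_large_B_asymptotics {Ω : Type*} [MeasurableSpace Ω] (μ : Measure Ω)
    [IsProbabilityMeasure μ]
    (g : Ω → ℝ) (hgpos : ∀ ω, 0 < g ω) (hgmeas : Measurable g)
    (hgnonconst : ¬ ∃ c : ℝ, ∀ᵐ ω ∂μ, g ω = c)
    (hint : Integrable (fun ω => 1 / g ω) μ) :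
    Tendsto (fun B : ℝ => Jopt2 μ g B
        / (2 * (2 : ℝ) ^ (B / 2)
          * ((∫ ω, (1 / g ω) ^ ((1 : ℝ) / 2) ∂μ) ^ 2 * (∫ ω, 1 / g ω ∂μ)) ^ ((1 : ℝ) / 2)))
      atTop (nhds 1) := by
  set ν₁ : ℝ := ∫ ω, 1 / g ω ∂μ with hν₁def
  set sfun : Ω → ℝ := fun ω => (1 / g ω) ^ ((1:ℝ)/2) with hsdef
  set Iν : ℝ := ∫ ω, sfun ω ∂μ with hIdef
  have hinv_pos : ∀ ω, 0 < 1 / g ω := fun ω => one_div_pos.mpr (hgpos ω)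
  have hν₁pos : 0 < ν₁ := by
    rw [hν₁def, integral_pos_iff_support_of_nonneg (fun ω => (hinv_pos ω).le) hint]
    have hsupp : Function.support (fun ω => 1 / g ω) = Set.univ :=
      Set.eq_univ_of_forall (fun ω => (hinv_pos ω).ne')
    rw [hsupp]; simp
  have hsmeas : Measurable sfun :=
    (Real.continuous_rpow_const (by norm_num)).measurable.comp (measurable_const.div hgmeas)
  have hs_pos : ∀ ω, 0 < sfun ω := fun ω => Real.rpow_pos_of_pos (hinv_pos ω) _
  have hs_int : Integrable sfun μ := by
    refine (hint.add (integrable_const 1)).mono' hsmeas.aestronglyMeasurable ?_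
    refine Eventually.of_forall (fun ω => ?_)
    simp only [Pi.add_apply]
    rw [Real.norm_eq_abs, abs_of_nonneg (hs_pos ω).le]
    have ht := hinv_pos ω
    rcases le_or_gt (1 / g ω) 1 with h | h
    · have hle : sfun ω ≤ 1 := by
        rw [hsdef]
        calc (1/g ω) ^ ((1:ℝ)/2) ≤ 1 ^ ((1:ℝ)/2) :=
              Real.rpow_le_rpow (hinv_pos ω).le h (by norm_num)
          _ = 1 := Real.one_rpow _
      linarith
    · have hle : sfun ω ≤ 1 / g ω := by
        rw [hsdef]
        calc (1/g ω) ^ ((1:ℝ)/2) ≤ (1/g ω) ^ (1:ℝ) :=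
              Real.rpow_le_rpow_of_exponent_le h.le (by norm_num)
          _ = 1 / g ω := Real.rpow_one _
      linarith
  have hIpos : 0 < Iν := by
    rw [hIdef, integral_pos_iff_support_of_nonneg (fun ω => (hs_pos ω).le) hs_int]
    have hsupp : Function.support sfun = Set.univ :=
      Set.eq_univ_of_forall (fun ω => (hs_pos ω).ne')
    rw [hsupp]; simp
  have hsqν : 0 < Real.sqrt ν₁ := Real.sqrt_pos.mpr hν₁pos
  set C : ℝ := (Iν^2 * ν₁) ^ ((1:ℝ)/2) with hCdef
  have hC : C = Iν * Real.sqrt ν₁ := by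
    rw [hCdef, ← Real.sqrt_eq_rpow, Real.sqrt_mul (sq_nonneg Iν), Real.sqrt_sq hIpos.le]
  have hJ : ∀ B : ℝ, Jopt2 μ g B = ∫ ω, GAux ν₁ B (1 / g ω) ∂μ := by
    intro B
    rw [Jopt2, ← hν₁def]
    congr 1
    funext ω
    unfold GAux
    have hfe : (fun b : ℝ => ((2:ℝ)^b - 1) / g ω + ν₁ * ((2:ℝ)^(B-b) - 1))
        = fbAux ν₁ (1/g ω) B := by
      funext b
      simp only [fbAux]
      rw [div_eq_mul_one_div ((2:ℝ)^b - 1) (g ω)]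
    rw [hfe]
  set F : ℝ → Ω → ℝ := fun B ω => GAux ν₁ B (1 / g ω) / (2 * (2:ℝ) ^ (B/2)) with hFdef
  have h2top : Tendsto (fun B : ℝ => (2:ℝ) ^ B) atTop atTop := by
    have h : Tendsto (fun B : ℝ => Real.exp (Real.log 2 * B)) atTop atTop :=
      Real.tendsto_exp_atTop.comp (Tendsto.const_mul_atTop (Real.log_pos one_lt_two) tendsto_id)
    refine h.congr (fun B => ?_)
    rw [Real.rpow_def_of_pos two_pos]
  have hDtop : Tendsto (fun B : ℝ => 2 * (2:ℝ) ^ (B/2)) atTop atTop := by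
    refine Tendsto.const_mul_atTop two_pos ?_
    have := h2top.comp (Tendsto.atTop_div_const two_pos
      (tendsto_id : Tendsto (fun B : ℝ => B) atTop atTop))
    exact this.congr (fun B => rfl)
  have hlim : ∀ ω, Tendsto (fun B => F B ω) atTop (𝓝 (Real.sqrt (ν₁ * (1 / g ω)))) := by
    intro ω
    have ht : 0 < 1 / g ω := hinv_pos ω
    set t : ℝ := 1 / g ω with htdef
    set L : ℝ := Real.sqrt (ν₁ * t) with hLdef
    have hlo : Tendsto (fun B : ℝ => L - (t + ν₁) / (2 * (2:ℝ)^(B/2))) atTop (𝓝 L) := by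
      have h0 : Tendsto (fun B : ℝ => (t + ν₁) / (2 * (2:ℝ)^(B/2))) atTop (𝓝 0) :=
        tendsto_const_nhds.div_atTop hDtop
      have := (tendsto_const_nhds (x := L)).sub h0
      simpa using this
    refine tendsto_of_tendsto_of_tendsto_of_le_of_le' hlo tendsto_const_nhds ?_ ?_
    · filter_upwards [eventually_ge_atTop (0:ℝ)] with B hB
      have hD : (0:ℝ) < 2 * (2:ℝ)^(B/2) := by positivity
      have hG := GAux_lower (ν := ν₁) (t := t) hν₁pos.le ht.le hB
      have h1 : (2 * (2:ℝ)^(B/2) * L - t - ν₁) / (2 * (2:ℝ)^(B/2))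
          ≤ GAux ν₁ B t / (2 * (2:ℝ)^(B/2)) := by gcongr
      have h2 : (2 * (2:ℝ)^(B/2) * L - t - ν₁) / (2 * (2:ℝ)^(B/2))
          = L - (t + ν₁) / (2 * (2:ℝ)^(B/2)) := by
        field_simp
        ring
      simp only [hFdef]
      rw [← h2]
      exact h1
    · have e1 : ∀ᶠ B : ℝ in atTop, t ≤ ν₁ * (2:ℝ)^B := by
        filter_upwards [h2top.eventually_ge_atTop (t / ν₁)] with B hB
        rw [div_le_iff₀ hν₁pos] at hB
        nlinarith
      have e2 : ∀ᶠ B : ℝ in atTop, ν₁ ≤ t * (2:ℝ)^B := by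
        filter_upwards [h2top.eventually_ge_atTop (ν₁ / t)] with B hB
        rw [div_le_iff₀ ht] at hB
        nlinarith
      filter_upwards [eventually_ge_atTop (0:ℝ), e1, e2] with B hB h1 h2
      have hD : (0:ℝ) < 2 * (2:ℝ)^(B/2) := by positivity
      have hup := GAux_upper hν₁pos ht hB h1 h2
      simp only [hFdef]
      rw [div_le_iff₀ hD]
      calc GAux ν₁ B t ≤ 2 * (2:ℝ)^(B/2) * L := hup
        _ = L * (2 * (2:ℝ)^(B/2)) := by ring
  have hmeas : ∀ᶠ B : ℝ in atTop, AEStronglyMeasurable (F B) μ := by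
    filter_upwards [eventually_ge_atTop (0:ℝ)] with B hB
    exact (((GAux_continuous ν₁ B hB).measurable.comp
      (measurable_const.div hgmeas)).div_const _).aestronglyMeasurable
  have hbound : ∀ᶠ B : ℝ in atTop, ∀ᵐ ω ∂μ, ‖F B ω‖ ≤ (1 / g ω + ν₁) / 2 := by
    filter_upwards [eventually_ge_atTop (0:ℝ)] with B hB
    refine Eventually.of_forall (fun ω => ?_)
    have ht := hinv_pos ω
    have hD : (0:ℝ) < 2 * (2:ℝ)^(B/2) := by positivity
    have hG0 := GAux_nonneg (ν := ν₁) (t := 1 / g ω) hν₁pos.le ht.le hB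
    have hGc := GAux_le_crude (ν := ν₁) (t := 1 / g ω) hν₁pos.le ht.le hB
    simp only [hFdef]
    rw [Real.norm_eq_abs, abs_of_nonneg (div_nonneg hG0 hD.le), div_le_iff₀ hD]
    calc GAux ν₁ B (1/g ω) ≤ (2:ℝ)^(B/2) * (1/g ω + ν₁) := hGc
      _ = (1/g ω + ν₁)/2 * (2 * (2:ℝ)^(B/2)) := by ring
  have hbint : Integrable (fun ω => (1/g ω + ν₁)/2) μ :=
    (hint.add (integrable_const _)).div_const 2
  have hmain : Tendsto (fun B => ∫ ω, F B ω ∂μ) atTop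
      (𝓝 (∫ ω, Real.sqrt (ν₁ * (1/g ω)) ∂μ)) :=
    tendsto_integral_filter_of_dominated_convergence _ hmeas hbound hbint
      (Eventually.of_forall hlim)
  have hlimval : (∫ ω, Real.sqrt (ν₁ * (1/g ω)) ∂μ) = Real.sqrt ν₁ * Iν := by
    rw [hIdef, ← integral_const_mul]
    refine integral_congr_ae (Eventually.of_forall (fun ω => ?_))
    show Real.sqrt (ν₁ * (1/g ω)) = Real.sqrt ν₁ * sfun ω
    rw [Real.sqrt_mul hν₁pos.le]
    congr 1
    show Real.sqrt (1/g ω) = (1/g ω) ^ ((1:ℝ)/2)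
    exact Real.sqrt_eq_rpow _
  have hfinal : Tendsto (fun B => (∫ ω, F B ω ∂μ) / C) atTop (𝓝 1) := by
    have h := hmain.div_const C
    rw [hlimval] at h
    have hone : Real.sqrt ν₁ * Iν / C = 1 := by
      rw [hC, mul_comm (Real.sqrt ν₁) Iν]
      exact div_self (by positivity : (0:ℝ) < Iν * Real.sqrt ν₁).ne'
    rwa [hone] at h
  refine hfinal.congr (fun B => ?_)
  simp only [hFdef]
  rw [integral_div, div_div, ← hJ B]
end

section
/- Let g be a positive random variable with E[1/g] < ∞ and E[|ln g|] < ∞, define ν_m := (E[(1/g)^{1/m}])^m for integers m ≥ 1, and for t ≥ 2 define the Suboptimal II threshold η_t := (ν_{t−1} ν_{t−2} ⋯ ν_1)^{−1/(t−1)}. Then lim_{t → ∞} E[ log₂(g / η_t) ] = 0. -/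
/-!
Write `X = 1 / g` and `E_m = E[X ^ (1/m)]`, so that `log ν_m = m log E_m`. Since
`log x ≤ m (x ^ (1/m) - 1) ≤ x - 1`, dominated convergence gives
`m (E_m - 1) → E[log X] = -E[log g]`, and as `E_m → 1` also `m log E_m → -E[log g]`.
Hence `log η_t`, minus the Cesàro mean of `log ν_1, …, log ν_{t-1}`, tends to `E[log g]`, and
`E[log₂ (g / η_t)] = (E[log g] - log η_t) / log 2 → 0`.
-/

open MeasureTheory Filter

/-- Fractional moment constant `ν_m := (E[(1/g)^{1/m}])^m` of the channel state `g`. -/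
noncomputable def nuM {Ω : Type*} [MeasurableSpace Ω] (μ : Measure Ω) (g : Ω → ℝ)
    (m : ℕ) : ℝ :=
  (∫ ω, (1 / g ω) ^ ((1 : ℝ) / (m : ℝ)) ∂μ) ^ (m : ℝ)

open Real Topology

lemma Real.one_add_mul_log_le_rpow {x : ℝ} (hx : 0 < x) (p : ℝ) : 1 + p * log x ≤ x ^ p := by
  rw [rpow_def_of_pos hx, mul_comm]
  linarith [add_one_le_exp (log x * p)]

lemma Real.rpow_le_one_add_mul_sub_one {x p : ℝ} (hx : 0 ≤ x) (hp₀ : 0 ≤ p) (hp₁ : p ≤ 1) :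
    x ^ p ≤ 1 + p * (x - 1) := by
  simpa using rpow_one_add_le_one_add_mul_self (s := x - 1) (by linarith) hp₀ hp₁

lemma Real.abs_natCast_mul_rpow_one_div_sub_one_le {x : ℝ} (hx : 0 < x) {m : ℕ} (hm : m ≠ 0) :
    |(m : ℝ) * (x ^ ((1 : ℝ) / m) - 1)| ≤ |x - 1| + |log x| := by
  have hm₀ : (0 : ℝ) < m := by positivity
  have hp₁ : (1 : ℝ) / m ≤ 1 := by
    rw [div_le_one hm₀]; exact_mod_cast Nat.one_le_iff_ne_zero.mpr hm
  have hlower : log x ≤ m * (x ^ ((1 : ℝ) / m) - 1) :=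
    calc log x = m * ((1 / m) * log x) := by field_simp
      _ ≤ m * (x ^ ((1 : ℝ) / m) - 1) := by
        gcongr; linarith [one_add_mul_log_le_rpow hx ((1 : ℝ) / m)]
  have hupper : m * (x ^ ((1 : ℝ) / m) - 1) ≤ x - 1 :=
    calc m * (x ^ ((1 : ℝ) / m) - 1) ≤ m * ((1 / m) * (x - 1)) := by
          gcongr; linarith [rpow_le_one_add_mul_sub_one hx.le (by positivity) hp₁]
      _ = x - 1 := by field_simp
  rw [abs_le]
  constructor <;> linarith [neg_abs_le (log x), le_abs_self (x - 1), abs_nonneg (x - 1),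
    abs_nonneg (log x)]

-- The difference quotient of `s ↦ x ^ s` at `0`, sampled along `s = 1 / m`.
lemma Real.tendsto_natCast_mul_rpow_one_div_sub_one {x : ℝ} (hx : 0 < x) :
    Tendsto (fun m : ℕ => (m : ℝ) * (x ^ ((1 : ℝ) / m) - 1)) atTop (𝓝 (log x)) := by
  have hslope := (hasStrictDerivAt_const_rpow hx 0).hasDerivAt.tendsto_slope_zero
  have hstep : Tendsto (fun m : ℕ => (1 : ℝ) / m) atTop (𝓝[≠] 0) :=
    tendsto_nhdsWithin_of_tendsto_nhds_of_eventually_within _ tendsto_one_div_atTop_nhds_zero_nat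
      (by filter_upwards [eventually_ne_atTop 0] with m hm; simpa using hm)
  rw [rpow_zero, one_mul] at hslope
  refine (hslope.comp hstep).congr fun m => ?_
  simp

lemma Real.tendsto_natCast_mul_log_of_tendsto_natCast_mul_sub_one {a : ℕ → ℝ} {ℓ : ℝ}
    (h : Tendsto (fun m : ℕ => (m : ℝ) * (a m - 1)) atTop (𝓝 ℓ)) :
    Tendsto (fun m : ℕ => (m : ℝ) * log (a m)) atTop (𝓝 ℓ) := by
  have ha : Tendsto a atTop (𝓝 1) := by
    have := (tendsto_inv_atTop_nhds_zero_nat.mul h).add_const 1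
    rw [zero_mul, zero_add] at this
    refine this.congr' ?_
    filter_upwards [eventually_ne_atTop 0] with m hm
    field_simp
    ring
  -- Squeeze `m log a` between `m (a - 1) / a` and `m (a - 1)`, using `1 - 1 / a ≤ log a ≤ a - 1`.
  have hlower : Tendsto (fun m : ℕ => (m : ℝ) * (a m - 1) / a m) atTop (𝓝 ℓ) := by
    have := h.div ha one_ne_zero
    rwa [div_one] at this
  refine tendsto_of_tendsto_of_tendsto_of_le_of_le' hlower h ?_ ?_
  · filter_upwards [ha.eventually_const_lt one_pos] with m hm
    rw [mul_div_assoc]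
    gcongr
    exact (le_of_eq (by field_simp)).trans (one_sub_inv_le_log_of_pos hm)
  · filter_upwards [ha.eventually_const_lt one_pos] with m hm
    exact mul_le_mul_of_nonneg_left (log_le_sub_one_of_pos hm) m.cast_nonneg

lemma Filter.Tendsto.cesaro_Icc {u : ℕ → ℝ} {ℓ : ℝ} (h : Tendsto u atTop (𝓝 ℓ)) :
    Tendsto (fun n : ℕ => (n : ℝ)⁻¹ * ∑ i ∈ Finset.Icc 1 n, u i) atTop (𝓝 ℓ) := by
  refine (h.comp (tendsto_add_atTop_nat 1)).cesaro.congr fun n => ?_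
  rw [Finset.range_eq_Ico, Function.comp_def, Finset.sum_Ico_add', zero_add,
    Finset.Ico_add_one_right_eq_Icc]

section Integral

variable {Ω : Type*} [MeasurableSpace Ω] {μ : Measure Ω}

lemma MeasureTheory.integral_pos_of_forall_pos [NeZero μ] {f : Ω → ℝ} (hf : ∀ ω, 0 < f ω)
    (hfi : Integrable f μ) : 0 < ∫ ω, f ω ∂μ := by
  rw [integral_pos_iff_support_of_nonneg (fun ω => (hf ω).le) hfi,
    Set.eq_univ_of_forall fun ω => Function.mem_support.mpr (hf ω).ne']
  simpa using NeZero.ne μ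

lemma MeasureTheory.Integrable.rpow_of_le_one [IsFiniteMeasure μ] {X : Ω → ℝ}
    (hX₀ : ∀ ω, 0 ≤ X ω) (hX : Integrable X μ) {p : ℝ} (hp₀ : 0 ≤ p) (hp₁ : p ≤ 1) :
    Integrable (fun ω => X ω ^ p) μ := by
  refine ((integrable_const 1).add hX).mono'
    ((continuous_rpow_const hp₀).comp_aestronglyMeasurable hX.aestronglyMeasurable) ?_
  refine .of_forall fun ω => ?_
  rw [norm_of_nonneg (rpow_nonneg (hX₀ ω) p), Pi.add_apply]
  nlinarith [rpow_le_one_add_mul_sub_one (hX₀ ω) hp₀ hp₁, mul_le_of_le_one_left (hX₀ ω) hp₁]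

variable [IsProbabilityMeasure μ] {X : Ω → ℝ}

lemma tendsto_natCast_mul_integral_rpow_one_div_sub_one (hX₀ : ∀ ω, 0 < X ω)
    (hX : Integrable X μ) (hlogX : Integrable (fun ω => log (X ω)) μ) :
    Tendsto (fun m : ℕ => (m : ℝ) * (∫ ω, X ω ^ ((1 : ℝ) / m) ∂μ - 1)) atTop
      (𝓝 (∫ ω, log (X ω) ∂μ)) := by
  have hdominated : Tendsto (fun m : ℕ => ∫ ω, (m : ℝ) * (X ω ^ ((1 : ℝ) / m) - 1) ∂μ) atTop
      (𝓝 (∫ ω, log (X ω) ∂μ)) := by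
    refine tendsto_integral_filter_of_dominated_convergence (fun ω => |X ω - 1| + |log (X ω)|)
      (.of_forall fun m => ?_) ?_ ((hX.sub (integrable_const 1)).abs.add hlogX.abs)
      (.of_forall fun ω => tendsto_natCast_mul_rpow_one_div_sub_one (hX₀ ω))
    · exact (((continuous_rpow_const (by positivity)).comp_aestronglyMeasurable
        hX.aestronglyMeasurable).sub aestronglyMeasurable_const).const_mul _
    · filter_upwards [eventually_ne_atTop 0] with m hm
      exact .of_forall fun ω => abs_natCast_mul_rpow_one_div_sub_one_le (hX₀ ω) hm
  refine hdominated.congr' ?_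
  filter_upwards [eventually_ne_atTop 0] with m hm
  have hp₁ : (1 : ℝ) / m ≤ 1 := by
    rw [div_le_one (by positivity)]; exact_mod_cast Nat.one_le_iff_ne_zero.mpr hm
  have hXp := hX.rpow_of_le_one (fun ω => (hX₀ ω).le) (by positivity) hp₁
  rw [integral_const_mul, integral_sub hXp (integrable_const 1), integral_const, probReal_univ,
    one_smul]

lemma integral_logb_div {g : Ω → ℝ} (hg₀ : ∀ ω, 0 < g ω)
    (hlog : Integrable (fun ω => log (g ω)) μ) {η : ℝ} (hη : 0 < η) (b : ℝ) :
    ∫ ω, logb b (g ω / η) ∂μ = (∫ ω, log (g ω) ∂μ - log η) / log b := by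
  simp_rw [logb, log_div (hg₀ _).ne' hη.ne']
  rw [integral_div, integral_sub hlog (integrable_const _), integral_const, probReal_univ,
    one_smul]

end Integral

theorem suboptII_mean_advantage_tendsto_zero_general {Ω : Type*} [MeasurableSpace Ω] (μ : Measure Ω)
    [IsProbabilityMeasure μ]
    (g : Ω → ℝ) (hgpos : ∀ ω, 0 < g ω)
    (hint : Integrable (fun ω => 1 / g ω) μ)
    (hlogint : Integrable (fun ω => Real.log (g ω)) μ) :
    Tendsto (fun t : ℕ =>
        ∫ ω, Real.logb 2 (g ω /
          ((∏ i ∈ Finset.Icc 1 (t - 1), nuM μ g i) ^ (-(1 : ℝ) / ((t : ℝ) - 1)))) ∂μ)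
      atTop (nhds 0) := by
  set L := ∫ ω, log (g ω) ∂μ
  have hX₀ (ω : Ω) : 0 < 1 / g ω := one_div_pos.mpr (hgpos ω)
  have hlogX : (fun ω => log (1 / g ω)) = fun ω => -log (g ω) := by
    ext ω; rw [one_div, log_inv]
  have hmoment_pos (m : ℕ) : 0 < ∫ ω, (1 / g ω) ^ ((1 : ℝ) / m) ∂μ :=
    integral_pos_of_forall_pos (fun ω => rpow_pos_of_pos (hX₀ ω) _)
      (hint.rpow_of_le_one (fun ω => (hX₀ ω).le) (by positivity) (by simp [Nat.cast_inv_le_one]))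
  have hnu_pos (m : ℕ) : 0 < nuM μ g m := rpow_pos_of_pos (hmoment_pos m) _
  have hlog_nu : Tendsto (fun m => log (nuM μ g m)) atTop (𝓝 (-L)) := by
    have := tendsto_natCast_mul_log_of_tendsto_natCast_mul_sub_one
      (tendsto_natCast_mul_integral_rpow_one_div_sub_one hX₀ hint (hlogX ▸ hlogint.neg))
    rw [hlogX, integral_neg] at this
    exact this.congr fun m => (log_rpow (hmoment_pos m) _).symm
  have hmean := ((hlog_nu.cesaro_Icc.comp (tendsto_sub_atTop_nat 1)).const_add L).div_const (log 2)
  rw [add_neg_cancel, zero_div] at hmean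
  refine hmean.congr' ?_
  filter_upwards [eventually_ge_atTop 1] with t ht
  have hprod_pos := Finset.prod_pos fun i (_ : i ∈ Finset.Icc 1 (t - 1)) => hnu_pos i
  rw [integral_logb_div hgpos hlogint (rpow_pos_of_pos hprod_pos _), log_rpow hprod_pos,
    log_prod fun i _ => (hnu_pos i).ne', Function.comp_apply, Nat.cast_sub ht, Nat.cast_one]
  ring

/-- With the Suboptimal II channel threshold `η_t := (ν_{t−1} ν_{t−2} ⋯ ν₁)^{−1/(t−1)}`,
the mean channel advantage `E[log₂(g/η_t)]` tends to `0` as `t → ∞`. -/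
theorem suboptII_mean_advantage_tendsto_zero {Ω : Type*} [MeasurableSpace Ω] (μ : Measure Ω)
    [IsProbabilityMeasure μ]
    (g : Ω → ℝ) (hgpos : ∀ ω, 0 < g ω) (hgmeas : Measurable g)
    (hint : Integrable (fun ω => 1 / g ω) μ)
    (hlogint : Integrable (fun ω => Real.log (g ω)) μ) :
    Tendsto (fun t : ℕ =>
        ∫ ω, Real.logb 2 (g ω /
          ((∏ i ∈ Finset.Icc 1 (t - 1), nuM μ g i) ^ (-(1 : ℝ) / ((t : ℝ) - 1)))) ∂μ)
      atTop (nhds 0) :=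
  suboptII_mean_advantage_tendsto_zero_general μ g hgpos hint hlogint
end
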